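/- Let p₀ > 0, q₀ ∈ (0, 1/4) small enough, and let u₀ = J_{q₀²} * v₀ be the mollification of the peakon-antipeakon profile v₀ (with v₀ as in the standard construction). Then u₀'(q₀) < 0; more precisely, writing u₀'(q₀) = K₁ + K₂ with K₁ = ∫_{−q₀² < y−q₀ ≤ 0} v₀'(y) J_{q₀²}(q₀−y) dy and K₂ = ∫_{0 < y−q₀ < q₀²} v₀'(y) J_{q₀²}(q₀−y) dy, one has K₁ = −(1/2)p₀e^{−q₀} and K₂ ≤ (1/2)p₀q₀e^{−q₀}, hence u₀'(q₀) ≤ −(1/2)p₀e^{−q₀}(1 − q₀) < 0. -/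

import Mathlib

open Real MeasureTheory Set

/-- The anti-symmetric peakon-antipeakon profile. -/
noncomputable def v0 (p q : ℝ) : ℝ → ℝ := fun x =>
  if x < -q then p * q * Real.exp x
  else if x ≤ q then -p * Real.exp (-q) * x
  else -p * q * Real.exp (-x)

/-- The derivative of the peakon-antipeakon profile. -/
noncomputable def dv0 (p q : ℝ) : ℝ → ℝ := fun x =>
  if x < -q then p * q * Real.exp x
  else if x < q then -p * Real.exp (-q)
  else p * q * Real.exp (-x)

/-- The Friedrichs mollifier bump function. -/
noncomputable def J : ℝ → ℝ := fun x =>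
  if |x| < 1 then
    Real.exp (1 / (x ^ 2 - 1)) / (∫ y in Set.Ioo (-1 : ℝ) 1, Real.exp (1 / (y ^ 2 - 1)))
  else 0

/-- The rescaled mollifier `J_ε(x) = ε⁻¹ J(x/ε)`. -/
noncomputable def Jmol (ε : ℝ) : ℝ → ℝ := fun x => (1 / ε) * J (x / ε)

/-- The mollified initial data `u₀ = J_{q₀²} * v₀`. -/
noncomputable def u0 (p q : ℝ) : ℝ → ℝ := fun x =>
  ∫ y : ℝ, Jmol (q ^ 2) y * v0 p q (x - y)

/-!
`v₀` is Lipschitz and differentiable away from its corners `±q₀`, so one may differentiate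
under the integral: `u₀'(q₀) = ∫ v₀'(y) J_ε(q₀ - y) dy` with `ε = q₀²`. Since `ε < 2q₀`, on
`(q₀ - ε, q₀)` the slope `v₀'` is the constant `-p₀e^{-q₀}`, while on `(q₀, q₀ + ε)` it is
`p₀q₀e^{-y} ≤ p₀q₀e^{-q₀}`; each half of the even mollifier carries mass `1/2`.
-/

open scoped NNReal

section Mollifier

lemma expNegInvGlue_one_sub_sq {x : ℝ} (hx : |x| < 1) :
    expNegInvGlue (1 - x ^ 2) = exp (1 / (x ^ 2 - 1)) := by
  have hx2 : 0 < 1 - x ^ 2 := by nlinarith [abs_lt.1 hx, sq_abs x]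
  rw [expNegInvGlue, if_neg hx2.not_ge, ← neg_sub, one_div, inv_neg, neg_neg]

lemma continuous_expNegInvGlue : Continuous expNegInvGlue :=
  (expNegInvGlue.contDiff (n := 0)).continuous

-- In this form the continuity of the bump at `±1` comes from that of `expNegInvGlue`.
lemma J_eq_div_integral (x : ℝ) :
    J x = expNegInvGlue (1 - x ^ 2) / ∫ y in Ioo (-1 : ℝ) 1, expNegInvGlue (1 - y ^ 2) := by
  have hint : ∫ y in Ioo (-1 : ℝ) 1, expNegInvGlue (1 - y ^ 2)
      = ∫ y in Ioo (-1 : ℝ) 1, exp (1 / (y ^ 2 - 1)) :=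
    setIntegral_congr_fun measurableSet_Ioo fun y hy =>
      expNegInvGlue_one_sub_sq (abs_lt.2 hy)
  rw [J, hint]
  split_ifs with hx
  · rw [expNegInvGlue_one_sub_sq hx]
  · rw [expNegInvGlue.zero_of_nonpos (by nlinarith [sq_abs x, not_lt.1 hx]), zero_div]

lemma integral_expNegInvGlue_one_sub_sq_pos :
    0 < ∫ y in Ioo (-1 : ℝ) 1, expNegInvGlue (1 - y ^ 2) := by
  rw [← integral_Ioc_eq_integral_Ioo, ← intervalIntegral.integral_of_le (by norm_num)]
  refine intervalIntegral.intervalIntegral_pos_of_pos_on ?_ (fun y hy => ?_) (by norm_num)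
  · exact (continuous_expNegInvGlue.comp (by fun_prop)).intervalIntegrable _ _
  · exact expNegInvGlue.pos_of_pos (by nlinarith [hy.1, hy.2])

lemma continuous_J : Continuous J := by
  simp only [funext J_eq_div_integral]
  exact (continuous_expNegInvGlue.comp (by fun_prop)).div_const _

lemma J_nonneg (x : ℝ) : 0 ≤ J x := by
  rw [J_eq_div_integral]
  exact div_nonneg (expNegInvGlue.nonneg _) integral_expNegInvGlue_one_sub_sq_pos.le

lemma J_eq_zero {x : ℝ} (hx : 1 ≤ |x|) : J x = 0 := by
  rw [J, if_neg hx.not_gt]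

lemma J_neg (x : ℝ) : J (-x) = J x := by
  simp only [J, abs_neg, neg_sq]

lemma integral_J_zero_one : ∫ x in (0 : ℝ)..1, J x = 1 / 2 := by
  have hint : ∀ a b : ℝ, IntervalIntegrable J volume a b := fun a b =>
    continuous_J.intervalIntegrable a b
  have htotal : ∫ x in (-1 : ℝ)..1, J x = 1 := by
    simp only [J_eq_div_integral, intervalIntegral.integral_div]
    rw [intervalIntegral.integral_of_le (by norm_num), integral_Ioc_eq_integral_Ioo]
    exact div_self integral_expNegInvGlue_one_sub_sq_pos.ne'
  have hsymm : ∫ x in (-1 : ℝ)..0, J x = ∫ x in (0 : ℝ)..1, J x := by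
    simpa only [neg_zero, J_neg] using
      (intervalIntegral.integral_comp_neg (a := 0) (b := 1) J).symm
  rw [← intervalIntegral.integral_add_adjacent_intervals (hint (-1) 0) (hint 0 1), hsymm]
    at htotal
  linarith

lemma integrable_J : Integrable J := by
  refine continuous_J.integrable_of_hasCompactSupport
    (HasCompactSupport.intro (isCompact_closedBall 0 1) fun x hx => J_eq_zero ?_)
  rw [Metric.mem_closedBall, dist_zero_right, Real.norm_eq_abs, not_le] at hx
  exact hx.le

variable {ε : ℝ}

lemma integrable_Jmol (ε : ℝ) : Integrable (Jmol ε) := by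
  rcases eq_or_ne ε 0 with rfl | hε
  · have h0 : Jmol 0 = 0 := funext fun x => by simp [Jmol]
    rw [h0]
    exact integrable_zero _ _ _
  · exact (integrable_J.comp_div hε).const_mul _

lemma Jmol_nonneg (hε : 0 ≤ ε) (x : ℝ) : 0 ≤ Jmol ε x :=
  mul_nonneg (by positivity) (J_nonneg _)

lemma Jmol_eq_zero (hε : 0 < ε) {x : ℝ} (hx : ε ≤ |x|) : Jmol ε x = 0 := by
  rw [Jmol, J_eq_zero, mul_zero]
  rwa [abs_div, abs_of_pos hε, le_div_iff₀ hε, one_mul]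

lemma Jmol_neg (ε x : ℝ) : Jmol ε (-x) = Jmol ε x := by
  rw [Jmol, Jmol, neg_div, J_neg]

lemma integral_Jmol_zero_right (hε : 0 < ε) : ∫ x in (0 : ℝ)..ε, Jmol ε x = 1 / 2 := by
  simp only [Jmol]
  rw [intervalIntegral.integral_const_mul, intervalIntegral.integral_comp_div _ hε.ne',
    zero_div, div_self hε.ne', integral_J_zero_one, smul_eq_mul]
  field_simp

lemma integral_Jmol_neg_zero (hε : 0 < ε) : ∫ x in (-ε)..0, Jmol ε x = 1 / 2 := by
  simpa only [neg_zero, Jmol_neg, integral_Jmol_zero_right hε] using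
    (intervalIntegral.integral_comp_neg (a := 0) (b := ε) (Jmol ε)).symm

end Mollifier

section Profile

variable {p q x : ℝ}

lemma v0_of_lt (h : x < -q) : v0 p q x = p * q * exp x := by
  rw [v0, if_pos h]

lemma v0_of_mem_Icc (h₁ : -q ≤ x) (h₂ : x ≤ q) : v0 p q x = -p * exp (-q) * x := by
  rw [v0, if_neg h₁.not_gt, if_pos h₂]

lemma v0_of_le (hq : 0 ≤ q) (h : q ≤ x) : v0 p q x = -p * q * exp (-x) := by
  rcases h.eq_or_lt with rfl | h
  · rw [v0_of_mem_Icc (by linarith) le_rfl]; ring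
  · rw [v0, if_neg (by linarith), if_neg h.not_ge]

lemma dv0_of_lt (h : x < -q) : dv0 p q x = p * q * exp x := by
  rw [dv0, if_pos h]

lemma dv0_of_mem_Ico (h₁ : -q ≤ x) (h₂ : x < q) : dv0 p q x = -p * exp (-q) := by
  rw [dv0, if_neg h₁.not_gt, if_pos h₂]

lemma dv0_of_le (hq : 0 ≤ q) (h : q ≤ x) : dv0 p q x = p * q * exp (-x) := by
  rw [dv0, if_neg (by linarith), if_neg h.not_gt]

lemma continuous_v0 (hq : 0 ≤ q) : Continuous (v0 p q) := by
  have hright : Continuous fun x => if x ≤ q then -p * exp (-q) * x else -p * q * exp (-x) :=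
    Continuous.if_le (by fun_prop) (by fun_prop) continuous_id continuous_const
      fun x hx => by rw [hx]; ring
  have hv : v0 p q = fun x => if -q ≤ x then
      (if x ≤ q then -p * exp (-q) * x else -p * q * exp (-x)) else p * q * exp x := by
    funext x
    simp only [v0, ← not_le (a := -q)]
    split_ifs <;> rfl
  rw [hv]
  refine continuous_if_le continuous_const continuous_id hright.continuousOn
    (by fun_prop : Continuous fun x => p * q * exp x).continuousOn fun x hx => ?_
  rw [if_pos (by linarith), ← hx]
  ring

lemma measurable_dv0 : Measurable (dv0 p q) := by
  unfold dv0
  exact Measurable.ite measurableSet_Iio (by fun_prop)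
    (Measurable.ite measurableSet_Iio (by fun_prop) (by fun_prop))

lemma hasDerivAt_neg_mul_exp_neg (a x : ℝ) :
    HasDerivAt (fun x => -a * exp (-x)) (a * exp (-x)) x := by
  simpa using ((hasDerivAt_exp (-x)).comp x (hasDerivAt_neg x)).const_mul (-a)

lemma hasDerivWithinAt_v0_Ici (hq : 0 ≤ q) (x : ℝ) :
    HasDerivWithinAt (v0 p q) (dv0 p q x) (Ici x) x := by
  rcases lt_or_ge x (-q) with h₁ | h₁
  · rw [dv0_of_lt h₁]
    refine (((hasDerivAt_exp x).const_mul _).congr_of_eventuallyEq ?_).hasDerivWithinAt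
    filter_upwards [Iio_mem_nhds h₁] with y hy using v0_of_lt hy
  rcases lt_or_ge x q with h₂ | h₂
  · rw [dv0_of_mem_Ico h₁ h₂]
    have hlin := ((hasDerivAt_id x).const_mul (-p * exp (-q))).hasDerivWithinAt (s := Ici x)
    rw [mul_one] at hlin
    refine hlin.congr_of_eventuallyEq ?_ (v0_of_mem_Icc h₁ h₂.le)
    filter_upwards [Ico_mem_nhdsGE h₂] with y hy using v0_of_mem_Icc (h₁.trans hy.1) hy.2.le
  · rw [dv0_of_le hq h₂]
    exact (hasDerivAt_neg_mul_exp_neg (p * q) x).hasDerivWithinAt.congr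
      (fun y hy => by rw [v0_of_le hq (h₂.trans hy)]; ring) (by rw [v0_of_le hq h₂]; ring)

lemma hasDerivAt_v0 (hq : 0 ≤ q) (h₁ : x ≠ -q) (h₂ : x ≠ q) :
    HasDerivAt (v0 p q) (dv0 p q x) x := by
  rcases h₁.lt_or_gt with h₁ | h₁
  · rw [dv0_of_lt h₁]
    refine ((hasDerivAt_exp x).const_mul _).congr_of_eventuallyEq ?_
    filter_upwards [Iio_mem_nhds h₁] with y hy using v0_of_lt hy
  rcases h₂.lt_or_gt with h₂ | h₂
  · rw [dv0_of_mem_Ico h₁.le h₂]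
    have hlin := (hasDerivAt_id x).const_mul (-p * exp (-q))
    rw [mul_one] at hlin
    refine hlin.congr_of_eventuallyEq ?_
    filter_upwards [Ioo_mem_nhds h₁ h₂] with y hy using v0_of_mem_Icc hy.1.le hy.2.le
  · rw [dv0_of_le hq h₂.le]
    refine (hasDerivAt_neg_mul_exp_neg (p * q) x).congr_of_eventuallyEq ?_
    filter_upwards [Ioi_mem_nhds h₂] with y hy
    rw [v0_of_le hq hy.le]; ring

lemma ae_hasDerivAt_v0 (hq : 0 ≤ q) : ∀ᵐ x, HasDerivAt (v0 p q) (dv0 p q x) x := by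
  have hnull : volume ({-q, q} : Set ℝ) = 0 := (toFinite _).measure_zero _
  filter_upwards [measure_eq_zero_iff_ae_notMem.1 hnull] with x hx
  simp only [mem_insert_iff, mem_singleton_iff, not_or] at hx
  exact hasDerivAt_v0 hq hx.1 hx.2

lemma abs_v0_le (hq : 0 ≤ q) (x : ℝ) : |v0 p q x| ≤ |p| * q := by
  rcases lt_or_ge x (-q) with h₁ | h₁
  · rw [v0_of_lt h₁, abs_mul, abs_mul, abs_of_nonneg hq, abs_exp]
    exact mul_le_of_le_one_right (by positivity) (exp_le_one_iff.2 (by linarith))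
  rcases le_or_gt x q with h₂ | h₂
  · rw [v0_of_mem_Icc h₁ h₂, abs_mul, abs_mul, abs_neg, abs_exp, mul_assoc]
    refine mul_le_mul_of_nonneg_left ?_ (abs_nonneg p)
    calc exp (-q) * |x| ≤ 1 * q :=
          mul_le_mul (exp_le_one_iff.2 (by linarith)) (abs_le.2 ⟨h₁, h₂⟩) (abs_nonneg x)
            zero_le_one
      _ = q := one_mul q
  · rw [v0_of_le hq h₂.le, abs_mul, abs_mul, abs_neg, abs_of_nonneg hq, abs_exp]
    exact mul_le_of_le_one_right (by positivity) (exp_le_one_iff.2 (by linarith))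

lemma abs_dv0_le (hq : 0 ≤ q) (x : ℝ) : |dv0 p q x| ≤ |p| * max 1 q := by
  rcases lt_or_ge x (-q) with h₁ | h₁
  · rw [dv0_of_lt h₁, abs_mul, abs_mul, abs_of_nonneg hq, abs_exp, mul_assoc]
    refine mul_le_mul_of_nonneg_left ?_ (abs_nonneg p)
    exact (mul_le_of_le_one_right hq (exp_le_one_iff.2 (by linarith))).trans (le_max_right 1 q)
  rcases lt_or_ge x q with h₂ | h₂
  · rw [dv0_of_mem_Ico h₁ h₂, abs_mul, abs_neg, abs_exp]
    refine mul_le_mul_of_nonneg_left ?_ (abs_nonneg p)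
    exact (exp_le_one_iff.2 (by linarith)).trans (le_max_left 1 q)
  · rw [dv0_of_le hq h₂, abs_mul, abs_mul, abs_of_nonneg hq, abs_exp, mul_assoc]
    refine mul_le_mul_of_nonneg_left ?_ (abs_nonneg p)
    exact (mul_le_of_le_one_right hq (exp_le_one_iff.2 (by linarith))).trans (le_max_right 1 q)

lemma lipschitzWith_v0 (hq : 0 ≤ q) (hq₁ : q ≤ 1) : LipschitzWith ‖p‖₊ (v0 p q) := by
  -- `dv0` is the right derivative of `v0` everywhere, corners included.
  refine LipschitzWith.of_dist_le_mul fun a b => ?_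
  wlog hba : b ≤ a generalizing a b
  · rw [dist_comm, dist_comm a]; exact this b a (le_of_not_ge hba)
  have hslope : ∀ x, |dv0 p q x| ≤ |p| := fun x =>
    (abs_dv0_le hq x).trans_eq (by rw [max_eq_left hq₁, mul_one])
  have hmvt := norm_image_sub_le_of_norm_deriv_right_le_segment
    (continuous_v0 (p := p) hq).continuousOn (fun x _ => hasDerivWithinAt_v0_Ici hq x)
    (fun x _ => hslope x) a ⟨hba, le_rfl⟩
  rwa [Real.dist_eq, Real.dist_eq, abs_of_nonneg (sub_nonneg.2 hba), coe_nnnorm]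

end Profile

section Convolution

theorem hasDerivAt_integral_mul_comp_sub {K v v' : ℝ → ℝ} {L : ℝ≥0} {C : ℝ}
    (hK : Integrable K) (hv : LipschitzWith L v) (hvC : ∀ z, |v z| ≤ C)
    (hv' : AEStronglyMeasurable v') (hd : ∀ᵐ z, HasDerivAt v (v' z) z) (x : ℝ) :
    HasDerivAt (fun x => ∫ y, K y * v (x - y)) (∫ y, K y * v' (x - y)) x := by
  have hshift : MeasurePreserving (fun y => x - y) volume volume :=
    Measure.measurePreserving_sub_left volume x
  have hvx : ∀ x : ℝ, Continuous fun y => v (x - y) := fun x =>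
    hv.continuous.comp (continuous_const.sub continuous_id)
  refine (hasDerivAt_integral_of_dominated_loc_of_lip (F := fun x y => K y * v (x - y))
    (bound := fun y => |K y| * L) Filter.univ_mem
    (Filter.Eventually.of_forall fun x => hK.aestronglyMeasurable.mul (hvx x).aestronglyMeasurable)
    (hK.mul_bdd (hvx x).aestronglyMeasurable (Filter.Eventually.of_forall fun y => hvC _))
    (hK.aestronglyMeasurable.mul (hv'.comp_measurePreserving hshift))
    (Filter.Eventually.of_forall fun y => ?_) (hK.abs.mul_const _)
    (hshift.quasiMeasurePreserving.ae hd |>.mono fun y hy => ?_)).2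
  · refine (LipschitzWith.of_dist_le_mul fun a b => ?_).lipschitzOnWith
    rw [Real.coe_nnabs, abs_of_nonneg (by positivity), Real.dist_eq, ← mul_sub, abs_mul,
      mul_assoc]
    refine mul_le_mul_of_nonneg_left ?_ (abs_nonneg _)
    simpa only [Real.dist_eq, sub_sub_sub_cancel_right] using hv.dist_le_mul (a - y) (b - y)
  · simpa using (hy.comp x ((hasDerivAt_id x).sub_const y)).const_mul (K y)

theorem integral_eq_setIntegral_Ioc_add_setIntegral_Ioo {E : Type*} [NormedAddCommGroup E]
    [NormedSpace ℝ E] {f : ℝ → E} {a b c : ℝ} (hab : a ≤ b) (hbc : b < c)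
    (hf : IntegrableOn f (Ioo a c)) (h0 : ∀ z ∉ Ioo a c, f z = 0) :
    ∫ z, f z = (∫ z in Ioc a b, f z) + ∫ z in Ioo b c, f z := by
  rw [← setIntegral_eq_integral_of_forall_compl_eq_zero h0, ← Ioc_union_Ioo_eq_Ioo hab hbc]
  refine setIntegral_union ?_ measurableSet_Ioo (hf.mono_set ?_) (hf.mono_set ?_)
  · exact Ioc_disjoint_Ioi_same.mono_right Ioo_subset_Ioi_self
  · exact Ioc_subset_Ioo_right hbc
  · exact Ioo_subset_Ioo_left (by linarith)

end Convolution

section Derivative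

variable {p q ε : ℝ}

lemma hasDerivAt_u0 (hq : 0 ≤ q) (hq₁ : q ≤ 1) (x : ℝ) :
    HasDerivAt (u0 p q) (∫ z, dv0 p q z * Jmol (q ^ 2) (x - z)) x := by
  show HasDerivAt (fun x => ∫ y, Jmol (q ^ 2) y * v0 p q (x - y)) _ x
  convert hasDerivAt_integral_mul_comp_sub (integrable_Jmol (q ^ 2))
    (lipschitzWith_v0 (p := p) hq hq₁) (abs_v0_le hq) measurable_dv0.aestronglyMeasurable
    (ae_hasDerivAt_v0 hq) x using 1
  rw [← integral_sub_left_eq_self _ volume x]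
  simp only [sub_sub_cancel, mul_comm]

lemma Jmol_sub_eq_zero (hε : 0 < ε) {x z : ℝ} (hz : z ∉ Ioo (x - ε) (x + ε)) :
    Jmol ε (x - z) = 0 := by
  refine Jmol_eq_zero hε ?_
  rw [mem_Ioo, not_and_or, not_lt, not_lt] at hz
  rcases hz with hz | hz
  · exact le_abs.2 (Or.inl (by linarith))
  · exact le_abs.2 (Or.inr (by linarith))

lemma integrable_dv0_mul_Jmol_sub (hq : 0 ≤ q) (ε x : ℝ) :
    Integrable fun z => dv0 p q z * Jmol ε (x - z) :=
  ((integrable_Jmol ε).comp_sub_left x).bdd_mul measurable_dv0.aestronglyMeasurable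
    (Filter.Eventually.of_forall fun z => abs_dv0_le hq z)

lemma setIntegral_Ioo_Jmol_sub_left (hε : 0 < ε) (x : ℝ) :
    ∫ z in Ioo (x - ε) x, Jmol ε (x - z) = 1 / 2 := by
  rw [← integral_Ioc_eq_integral_Ioo, ← intervalIntegral.integral_of_le (by linarith),
    intervalIntegral.integral_comp_sub_left, sub_self, sub_sub_cancel, integral_Jmol_zero_right hε]

lemma setIntegral_Ioo_Jmol_sub_right (hε : 0 < ε) (x : ℝ) :
    ∫ z in Ioo x (x + ε), Jmol ε (x - z) = 1 / 2 := by
  rw [← integral_Ioc_eq_integral_Ioo, ← intervalIntegral.integral_of_le (by linarith),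
    intervalIntegral.integral_comp_sub_left, sub_self, sub_add_cancel_left,
    integral_Jmol_neg_zero hε]

lemma setIntegral_Ioc_dv0_mul_Jmol_sub (hε : 0 < ε) (hεq : ε ≤ 2 * q) :
    ∫ y in Ioc (q - ε) q, dv0 p q y * Jmol ε (q - y) = -(1 / 2) * p * exp (-q) := by
  have hconst : EqOn (fun y => dv0 p q y * Jmol ε (q - y))
      (fun y => -p * exp (-q) * Jmol ε (q - y)) (Ioo (q - ε) q) := fun y hy => by
    simp only [dv0_of_mem_Ico (by linarith [hy.1]) hy.2]
  rw [integral_Ioc_eq_integral_Ioo, setIntegral_congr_fun measurableSet_Ioo hconst,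
    integral_const_mul, setIntegral_Ioo_Jmol_sub_left hε]
  ring

lemma setIntegral_Ioo_dv0_mul_Jmol_sub_le (hp : 0 ≤ p) (hq : 0 ≤ q) (hε : 0 < ε) :
    ∫ y in Ioo q (q + ε), dv0 p q y * Jmol ε (q - y) ≤ (1 / 2) * p * q * exp (-q) := calc
  _ ≤ ∫ y in Ioo q (q + ε), p * q * exp (-q) * Jmol ε (q - y) := by
    refine setIntegral_mono_on (integrable_dv0_mul_Jmol_sub hq ε q).integrableOn
      (((integrable_Jmol ε).comp_sub_left q).const_mul _).integrableOn measurableSet_Ioo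
      fun y hy => ?_
    rw [dv0_of_le hq hy.1.le]
    gcongr
    · exact Jmol_nonneg hε.le _
    · exact hy.1.le
  _ = (1 / 2) * p * q * exp (-q) := by
    rw [integral_const_mul, setIntegral_Ioo_Jmol_sub_right hε]
    ring

end Derivative

theorem deriv_u0_at_q0_neg (p₀ q₀ : ℝ) (hp₀ : 0 < p₀) (hq₀ : q₀ ∈ Set.Ioo (0 : ℝ) (1 / 4))
    (K₁ K₂ : ℝ)
    (hK₁ : K₁ = ∫ y in Set.Ioc (q₀ - q₀ ^ 2) q₀, dv0 p₀ q₀ y * Jmol (q₀ ^ 2) (q₀ - y))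
    (hK₂ : K₂ = ∫ y in Set.Ioo q₀ (q₀ + q₀ ^ 2), dv0 p₀ q₀ y * Jmol (q₀ ^ 2) (q₀ - y)) :
    deriv (u0 p₀ q₀) q₀ = K₁ + K₂ ∧
      K₁ = -(1 / 2) * p₀ * Real.exp (-q₀) ∧
      K₂ ≤ (1 / 2) * p₀ * q₀ * Real.exp (-q₀) ∧
      deriv (u0 p₀ q₀) q₀ ≤ -(1 / 2) * p₀ * Real.exp (-q₀) * (1 - q₀) ∧
      deriv (u0 p₀ q₀) q₀ < 0 := by
  obtain ⟨hq, hq₄⟩ := hq₀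
  have hε : 0 < q₀ ^ 2 := by positivity
  have hderiv : deriv (u0 p₀ q₀) q₀ = K₁ + K₂ := by
    rw [(hasDerivAt_u0 hq.le (by linarith) q₀).deriv, hK₁, hK₂]
    exact integral_eq_setIntegral_Ioc_add_setIntegral_Ioo (by linarith) (by linarith)
      (integrable_dv0_mul_Jmol_sub hq.le _ _).integrableOn
      fun z hz => by rw [Jmol_sub_eq_zero hε hz, mul_zero]
  have hK₁val : K₁ = -(1 / 2) * p₀ * exp (-q₀) :=
    hK₁ ▸ setIntegral_Ioc_dv0_mul_Jmol_sub hε (by nlinarith)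
  have hK₂le : K₂ ≤ (1 / 2) * p₀ * q₀ * exp (-q₀) :=
    hK₂ ▸ setIntegral_Ioo_dv0_mul_Jmol_sub_le hp₀.le hq.le hε
  have hbound : deriv (u0 p₀ q₀) q₀ ≤ -(1 / 2) * p₀ * exp (-q₀) * (1 - q₀) := by
    rw [hderiv, hK₁val]
    linarith
  refine ⟨hderiv, hK₁val, hK₂le, hbound, hbound.trans_lt ?_⟩
  have : 0 < p₀ * exp (-q₀) * (1 - q₀) := mul_pos (mul_pos hp₀ (exp_pos _)) (by linarith)
  linarith
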